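/- arXiv:1609.05828 — 4 statements merged into one kernel-verified Lean document; each statement's English description precedes it below -/
import Mathlib

section
/- Under the standing assumptions, the family {g_Q : Q is an interior square of S} of functions g_Q : S → ℝ, where g_Q(Q) = −4, g_Q(Q') = 1 for each diagonal neighbor Q' of Q, and g_Q = 0 at all other squares of S, is linearly independent. -/
/-- The closed unit square `[i,i+1] × [j,j+1] ⊆ ℝ²` indexed by `q = (i,j) ∈ ℤ × ℤ`. -/
def unitSq (q : ℤ × ℤ) : Set (ℝ × ℝ) :=
  Set.Icc (q.1 : ℝ) (q.1 + 1) ×ˢ Set.Icc (q.2 : ℝ) (q.2 + 1)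

/-- `Ω̄`, the union of the closed squares of the mesh `S`. -/
def meshRegion (S : Finset (ℤ × ℤ)) : Set (ℝ × ℝ) := ⋃ q ∈ S, unitSq q

/-- `v` is an interior vertex of `S`: all four grid squares having `v` as a corner belong
to `S`. -/
abbrev interiorVertex (S : Finset (ℤ × ℤ)) (v : ℤ × ℤ) : Prop :=
  (v.1 - 1, v.2 - 1) ∈ S ∧ (v.1 - 1, v.2) ∈ S ∧ (v.1, v.2 - 1) ∈ S ∧ v ∈ S

/-- `v` is a mesh vertex of `S`: it is a corner of some square of `S`. -/
abbrev meshVertex (S : Finset (ℤ × ℤ)) (v : ℤ × ℤ) : Prop :=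
  (v.1 - 1, v.2 - 1) ∈ S ∨ (v.1 - 1, v.2) ∈ S ∨ (v.1, v.2 - 1) ∈ S ∨ v ∈ S

/-- `v` is a boundary vertex of `S`: a mesh vertex which is not interior. -/
abbrev boundaryVertex (S : Finset (ℤ × ℤ)) (v : ℤ × ℤ) : Prop :=
  meshVertex S v ∧ ¬ interiorVertex S v

/-- The four corners of the square indexed by `q`. -/
def cornersF (q : ℤ × ℤ) : Finset (ℤ × ℤ) :=
  {q, (q.1 + 1, q.2), (q.1, q.2 + 1), (q.1 + 1, q.2 + 1)}

/-- `q` is an interior square: all four of its corners are interior vertices. -/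
abbrev interiorSquare (S : Finset (ℤ × ℤ)) (q : ℤ × ℤ) : Prop :=
  interiorVertex S q ∧ interiorVertex S (q.1 + 1, q.2) ∧
    interiorVertex S (q.1, q.2 + 1) ∧ interiorVertex S (q.1 + 1, q.2 + 1)

/-- The square `(i,j)` is red if `i + j` is even (and black otherwise). -/
abbrev isRed (q : ℤ × ℤ) : Prop := (q.1 + q.2) % 2 = 0

/-- The standing assumptions on the mesh `S`: it is nonempty, `Ω` is connected and simply
connected, no square has four boundary corners, every grid edge shared by two squares of `S`
has an interior endpoint, and no square has exactly two boundary corners lying at diagonally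
opposite corners. -/
structure Standing (S : Finset (ℤ × ℤ)) : Prop where
  nonempty : S.Nonempty
  connected : IsConnected (interior (meshRegion S))
  simplyConnected : SimplyConnectedSpace ↥(interior (meshRegion S))
  noFourBoundary : ∀ q ∈ S,
    ¬ (boundaryVertex S q ∧ boundaryVertex S (q.1 + 1, q.2) ∧
        boundaryVertex S (q.1, q.2 + 1) ∧ boundaryVertex S (q.1 + 1, q.2 + 1))
  edgeH : ∀ v : ℤ × ℤ, v ∈ S → (v.1, v.2 - 1) ∈ S →
    interiorVertex S v ∨ interiorVertex S (v.1 + 1, v.2)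
  edgeV : ∀ v : ℤ × ℤ, v ∈ S → (v.1 - 1, v.2) ∈ S →
    interiorVertex S v ∨ interiorVertex S (v.1, v.2 + 1)
  noDiagOne : ∀ q ∈ S,
    ¬ (boundaryVertex S q ∧ boundaryVertex S (q.1 + 1, q.2 + 1) ∧
        interiorVertex S (q.1 + 1, q.2) ∧ interiorVertex S (q.1, q.2 + 1))
  noDiagTwo : ∀ q ∈ S,
    ¬ (boundaryVertex S (q.1 + 1, q.2) ∧ boundaryVertex S (q.1, q.2 + 1) ∧
        interiorVertex S q ∧ interiorVertex S (q.1 + 1, q.2 + 1))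

/-- The discrete `x`-derivative `∂ˣc(Q)` of a scalar vertex function on the square `Q`. -/
def dX (c : ℤ × ℤ → ℝ) (q : ℤ × ℤ) : ℝ :=
  c (q.1 + 1, q.2) + c (q.1 + 1, q.2 + 1) - c (q.1, q.2) - c (q.1, q.2 + 1)

/-- The discrete `y`-derivative `∂ʸc(Q)` of a scalar vertex function on the square `Q`. -/
def dY (c : ℤ × ℤ → ℝ) (q : ℤ × ℤ) : ℝ :=
  c (q.1, q.2 + 1) + c (q.1 + 1, q.2 + 1) - c (q.1, q.2) - c (q.1 + 1, q.2)

/-- The discrete divergence `(Dc)(Q) = ∂ˣc¹(Q) + ∂ʸc²(Q)`. -/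
def Ddiv (c : ℤ × ℤ → ℝ × ℝ) (q : ℤ × ℤ) : ℝ :=
  dX (fun v => (c v).1) q + dY (fun v => (c v).2) q

/-- The discrete curl `(Cc)(Q) = ∂ˣc²(Q) − ∂ʸc¹(Q)`. -/
def Ccurl (c : ℤ × ℤ → ℝ × ℝ) (q : ℤ × ℤ) : ℝ :=
  dX (fun v => (c v).2) q - dY (fun v => (c v).1) q

/-- `q'` is one of the four diagonal neighbors `(i±1, j±1)` of the square `q = (i,j)`. -/
abbrev diagNbr (q q' : ℤ × ℤ) : Prop :=
  (q'.1 - q.1 = 1 ∨ q'.1 - q.1 = -1) ∧ (q'.2 - q.2 = 1 ∨ q'.2 - q.2 = -1)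

/-- The discrete curl `g_Q` of the locally divergence-free basis element `Ψ_h^Q` attached to
the square `Q`: it takes the value `−4` at `Q`, the value `1` at each of the four diagonal
neighbors of `Q`, and `0` elsewhere. -/
noncomputable def gQ (q : ℤ × ℤ) : (ℤ × ℤ) → ℝ := fun q' =>
  if q' = q then -4 else if diagNbr q q' then 1 else 0

/-!
Evaluated at the squares of `S`, a combination `∑ c_Q g_Q` is the diagonal Laplacian of the
coefficient function `c` (extended by zero). A function vanishing outside a finite set and
diagonally harmonic on it vanishes: at a point where `|c|` is maximal, and rightmost among such
points, `c` equals the mean of its four diagonal neighbours, which forces the value at the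
north-east neighbour to be equally large, contradicting the choice of the point.
-/

def diagLaplacian (c : ℤ × ℤ → ℝ) (x : ℤ × ℤ) : ℝ :=
  c (x.1 + 1, x.2 + 1) + c (x.1 + 1, x.2 - 1) + c (x.1 - 1, x.2 + 1) + c (x.1 - 1, x.2 - 1)
    - 4 * c x

lemma gQ_eq_ite (q x : ℤ × ℤ) :
    gQ q x = (if q = (x.1 + 1, x.2 + 1) then 1 else 0) + (if q = (x.1 + 1, x.2 - 1) then 1 else 0)
      + (if q = (x.1 - 1, x.2 + 1) then 1 else 0) + (if q = (x.1 - 1, x.2 - 1) then 1 else 0)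
      - 4 * (if q = x then 1 else 0) := by
  obtain ⟨a, b⟩ := q
  obtain ⟨i, j⟩ := x
  simp only [gQ, diagNbr, Prod.ext_iff]
  split_ifs <;> (try norm_num) <;> omega

lemma sum_mul_gQ_eq_diagLaplacian {s : Finset (ℤ × ℤ)} {c : ℤ × ℤ → ℝ}
    (hc : ∀ x ∉ s, c x = 0) (x : ℤ × ℤ) :
    ∑ q ∈ s, c q * gQ q x = diagLaplacian c x := by
  have sum_mul_ite_eq (p : ℤ × ℤ) : ∑ q ∈ s, c q * (if q = p then 1 else 0) = c p := by
    simp only [mul_ite, mul_one, mul_zero, Finset.sum_ite_eq']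
    split_ifs with hp
    · rfl
    · exact (hc p hp).symm
  simp only [gQ_eq_ite, mul_sub, mul_add, Finset.sum_sub_distrib, Finset.sum_add_distrib,
    mul_left_comm _ (4 : ℝ), ← Finset.mul_sum, sum_mul_ite_eq, diagLaplacian]

lemma eq_of_four_mul_eq_add_of_abs_le {a b c d e M : ℝ} (ha : |a| ≤ M) (hb : |b| ≤ M)
    (hc : |c| ≤ M) (hd : |d| ≤ M) (he : |e| = M) (h : a + b + c + d = 4 * e) : a = e := by
  rw [abs_le] at ha hb hc hd
  rcases abs_eq (he ▸ abs_nonneg e) |>.mp he with rfl | rfl <;> linarith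

theorem eq_zero_of_diagLaplacian_eq_zero {s : Finset (ℤ × ℤ)} {c : ℤ × ℤ → ℝ}
    (hc : ∀ x ∉ s, c x = 0) (hL : ∀ x ∈ s, diagLaplacian c x = 0) (x : ℤ × ℤ) : c x = 0 := by
  by_contra hx
  have hxs : x ∈ s := by_contra fun h => hx (hc x h)
  obtain ⟨y, hys, hy⟩ := s.exists_max_image (fun z => toLex (|c z|, z.1)) ⟨x, hxs⟩
  have abs_le_abs (z : ℤ × ℤ) : |c z| ≤ |c y| := by
    by_cases hzs : z ∈ s
    · rcases Prod.Lex.toLex_le_toLex.mp (hy z hzs) with h | h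
      exacts [h.le, h.1.le]
    · simp [hc z hzs]
  set z : ℤ × ℤ := (y.1 + 1, y.2 + 1)
  have hmean := hL y hys
  rw [diagLaplacian, sub_eq_zero] at hmean
  have hz : c z = c y := eq_of_four_mul_eq_add_of_abs_le (abs_le_abs _) (abs_le_abs _)
    (abs_le_abs _) (abs_le_abs _) rfl hmean
  have hzs : z ∈ s := by
    by_contra h
    have : |c x| ≤ 0 := by simpa [← hz, hc z h] using abs_le_abs x
    exact hx (abs_nonpos_iff.mp this)
  have hzy := Prod.Lex.toLex_le_toLex.mp (hy z hzs)
  simp only [hz, lt_self_iff_false, true_and, false_or, z] at hzy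
  omega

lemma linearIndependent_gQ_restrict (S : Finset (ℤ × ℤ)) :
    LinearIndependent ℝ (fun q : S => fun x : S => gQ q.1 x.1) := by
  rw [Fintype.linearIndependent_iff]
  intro g hg q
  set c : ℤ × ℤ → ℝ := Function.extend Subtype.val g 0
  have hcg (p : S) : c p = g p := Subtype.val_injective.extend_apply g 0 p
  have hc : ∀ x ∉ S, c x = 0 := fun x hx =>
    Function.extend_apply' _ _ _ fun ⟨p, hp⟩ => hx (hp ▸ p.2)
  have hL : ∀ x ∈ S, diagLaplacian c x = 0 := fun x hx => by
    rw [← sum_mul_gQ_eq_diagLaplacian hc, ← Finset.sum_coe_sort]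
    simpa [hcg] using congrFun hg ⟨x, hx⟩
  rw [← hcg]
  exact eq_zero_of_diagLaplacian_eq_zero hc hL q

theorem gQ_linearIndependent_general (S : Finset (ℤ × ℤ)) :
    LinearIndependent ℝ
      (fun Q : {q : ℤ × ℤ // q ∈ S ∧ interiorSquare S q} =>
        fun s : {x : ℤ × ℤ // x ∈ S} => gQ Q.1 s.1) :=
  (linearIndependent_gQ_restrict S).comp
    (fun Q : {q : ℤ × ℤ // q ∈ S ∧ interiorSquare S q} => ⟨Q.1, Q.2.1⟩)
    fun _ _ h => Subtype.ext (Subtype.mk.inj h)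

/-- Under the standing assumptions, the family
`{g_Q : Q is an interior square of S}` of functions on the squares of `S`, where `g_Q(Q) = −4`,
`g_Q(Q') = 1` for each diagonal neighbor `Q'` of `Q`, and `g_Q = 0` at all other squares of
`S`, is linearly independent. -/
theorem gQ_linearIndependent (S : Finset (ℤ × ℤ)) (h : Standing S) :
    LinearIndependent ℝ
      (fun Q : {q : ℤ × ℤ // q ∈ S ∧ interiorSquare S q} =>
        fun s : {x : ℤ × ℤ // x ∈ S} => gQ Q.1 s.1) :=
  gQ_linearIndependent_general S
end

section
/- Under the standing assumptions, for every interior red square Q_R of S and every interior black square Q_K of S, the broken H¹ inner product of the corresponding locally divergence-free elements vanishes: ⟨∇c_{Q_R}, ∇c_{Q_K}⟩ = 0. -/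
/-- The coefficient vector `c_Q` of the locally divergence-free element `Ψ_h^Q` attached to
the interior square `Q = (i,j)`: its only nonzero values are `c_Q(i+1,j+1) = (1/2,−1/2)`,
`c_Q(i,j+1) = (1/2,1/2)`, `c_Q(i,j) = (−1/2,1/2)` and `c_Q(i+1,j) = (−1/2,−1/2)`. -/
noncomputable def cQ (q : ℤ × ℤ) : (ℤ × ℤ) → ℝ × ℝ := fun v =>
  if v = (q.1 + 1, q.2 + 1) then (1 / 2, -(1 / 2))
  else if v = (q.1, q.2 + 1) then (1 / 2, 1 / 2)
  else if v = q then (-(1 / 2), 1 / 2)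
  else if v = (q.1 + 1, q.2) then (-(1 / 2), -(1 / 2))
  else (0, 0)

/-- The broken `H¹` inner product of the `P1`-nonconforming vector fields with coefficient
vectors `c` and `c'`:
`⟨∇c,∇c'⟩ = Σ_{Q∈S} [∂ˣc¹(Q)∂ˣc'¹(Q) + ∂ʸc¹(Q)∂ʸc'¹(Q) + ∂ˣc²(Q)∂ˣc'²(Q) + ∂ʸc²(Q)∂ʸc'²(Q)]`. -/
noncomputable def innerH (S : Finset (ℤ × ℤ)) (c c' : (ℤ × ℤ) → ℝ × ℝ) : ℝ :=
  ∑ q ∈ S,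
    (dX (fun v => (c v).1) q * dX (fun v => (c' v).1) q +
      dY (fun v => (c v).1) q * dY (fun v => (c' v).1) q +
      dX (fun v => (c v).2) q * dX (fun v => (c' v).2) q +
      dY (fun v => (c v).2) q * dY (fun v => (c' v).2) q)


noncomputable def Pv (a b : ℤ) : ℝ × ℝ :=
  if a = 1 ∧ b = 1 then (1 / 2, -(1 / 2))
  else if a = 0 ∧ b = 1 then (1 / 2, 1 / 2)
  else if a = 0 ∧ b = 0 then (-(1 / 2), 1 / 2)
  else if a = 1 ∧ b = 0 then (-(1 / 2), -(1 / 2))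
  else (0, 0)

lemma cQ_eval (q v : ℤ × ℤ) : cQ q v = Pv (v.1 - q.1) (v.2 - q.2) := by
  obtain ⟨i, j⟩ := q; obtain ⟨x, y⟩ := v
  unfold cQ Pv
  split_ifs <;> simp_all [Prod.ext_iff] <;> omega

lemma dX1_eval (q p : ℤ × ℤ) : dX (fun v => (cQ q v).1) p =
    (Pv (p.1 - q.1 + 1) (p.2 - q.2)).1 + (Pv (p.1 - q.1 + 1) (p.2 - q.2 + 1)).1
      - (Pv (p.1 - q.1) (p.2 - q.2)).1 - (Pv (p.1 - q.1) (p.2 - q.2 + 1)).1 := by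
  simp only [dX, cQ_eval]
  rw [show p.1 + 1 - q.1 = p.1 - q.1 + 1 from by ring,
      show p.2 + 1 - q.2 = p.2 - q.2 + 1 from by ring]

lemma dY1_eval (q p : ℤ × ℤ) : dY (fun v => (cQ q v).1) p =
    (Pv (p.1 - q.1) (p.2 - q.2 + 1)).1 + (Pv (p.1 - q.1 + 1) (p.2 - q.2 + 1)).1
      - (Pv (p.1 - q.1) (p.2 - q.2)).1 - (Pv (p.1 - q.1 + 1) (p.2 - q.2)).1 := by
  simp only [dY, cQ_eval]
  rw [show p.1 + 1 - q.1 = p.1 - q.1 + 1 from by ring,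
      show p.2 + 1 - q.2 = p.2 - q.2 + 1 from by ring]

lemma dX2_eval (q p : ℤ × ℤ) : dX (fun v => (cQ q v).2) p =
    (Pv (p.1 - q.1 + 1) (p.2 - q.2)).2 + (Pv (p.1 - q.1 + 1) (p.2 - q.2 + 1)).2
      - (Pv (p.1 - q.1) (p.2 - q.2)).2 - (Pv (p.1 - q.1) (p.2 - q.2 + 1)).2 := by
  simp only [dX, cQ_eval]
  rw [show p.1 + 1 - q.1 = p.1 - q.1 + 1 from by ring,
      show p.2 + 1 - q.2 = p.2 - q.2 + 1 from by ring]

lemma dY2_eval (q p : ℤ × ℤ) : dY (fun v => (cQ q v).2) p =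
    (Pv (p.1 - q.1) (p.2 - q.2 + 1)).2 + (Pv (p.1 - q.1 + 1) (p.2 - q.2 + 1)).2
      - (Pv (p.1 - q.1) (p.2 - q.2)).2 - (Pv (p.1 - q.1 + 1) (p.2 - q.2)).2 := by
  simp only [dY, cQ_eval]
  rw [show p.1 + 1 - q.1 = p.1 - q.1 + 1 from by ring,
      show p.2 + 1 - q.2 = p.2 - q.2 + 1 from by ring]

lemma Pv1_zero {a b : ℤ} (h : a ≤ -1 ∨ 2 ≤ a ∨ b ≤ -1 ∨ 2 ≤ b) : (Pv a b).1 = 0 := by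
  unfold Pv; split_ifs <;> first | rfl | (exfalso; omega)

lemma Pv2_zero {a b : ℤ} (h : a ≤ -1 ∨ 2 ≤ a ∨ b ≤ -1 ∨ 2 ≤ b) : (Pv a b).2 = 0 := by
  unfold Pv; split_ifs <;> first | rfl | (exfalso; omega)

lemma dX1_zero (q p : ℤ × ℤ)
    (h : p.1 ≤ q.1 - 2 ∨ q.1 + 2 ≤ p.1 ∨ p.2 ≤ q.2 - 2 ∨ q.2 + 2 ≤ p.2) :
    dX (fun v => (cQ q v).1) p = 0 := by
  rw [dX1_eval, Pv1_zero (by omega), Pv1_zero (by omega), Pv1_zero (by omega),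
    Pv1_zero (by omega)]; ring

lemma dY1_zero (q p : ℤ × ℤ)
    (h : p.1 ≤ q.1 - 2 ∨ q.1 + 2 ≤ p.1 ∨ p.2 ≤ q.2 - 2 ∨ q.2 + 2 ≤ p.2) :
    dY (fun v => (cQ q v).1) p = 0 := by
  rw [dY1_eval, Pv1_zero (by omega), Pv1_zero (by omega), Pv1_zero (by omega),
    Pv1_zero (by omega)]; ring

lemma dX2_zero (q p : ℤ × ℤ)
    (h : p.1 ≤ q.1 - 2 ∨ q.1 + 2 ≤ p.1 ∨ p.2 ≤ q.2 - 2 ∨ q.2 + 2 ≤ p.2) :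
    dX (fun v => (cQ q v).2) p = 0 := by
  rw [dX2_eval, Pv2_zero (by omega), Pv2_zero (by omega), Pv2_zero (by omega),
    Pv2_zero (by omega)]; ring

lemma dY2_zero (q p : ℤ × ℤ)
    (h : p.1 ≤ q.1 - 2 ∨ q.1 + 2 ≤ p.1 ∨ p.2 ≤ q.2 - 2 ∨ q.2 + 2 ≤ p.2) :
    dY (fun v => (cQ q v).2) p = 0 := by
  rw [dY2_eval, Pv2_zero (by omega), Pv2_zero (by omega), Pv2_zero (by omega),
    Pv2_zero (by omega)]; ring

lemma term_zero_left (q q' p : ℤ × ℤ)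
    (h : p.1 ≤ q.1 - 2 ∨ q.1 + 2 ≤ p.1 ∨ p.2 ≤ q.2 - 2 ∨ q.2 + 2 ≤ p.2) :
    dX (fun v => (cQ q v).1) p * dX (fun v => (cQ q' v).1) p +
      dY (fun v => (cQ q v).1) p * dY (fun v => (cQ q' v).1) p +
      dX (fun v => (cQ q v).2) p * dX (fun v => (cQ q' v).2) p +
      dY (fun v => (cQ q v).2) p * dY (fun v => (cQ q' v).2) p = 0 := by
  rw [dX1_zero q p h, dY1_zero q p h, dX2_zero q p h, dY2_zero q p h]; ring

lemma term_zero_right (q q' p : ℤ × ℤ)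
    (h : p.1 ≤ q'.1 - 2 ∨ q'.1 + 2 ≤ p.1 ∨ p.2 ≤ q'.2 - 2 ∨ q'.2 + 2 ≤ p.2) :
    dX (fun v => (cQ q v).1) p * dX (fun v => (cQ q' v).1) p +
      dY (fun v => (cQ q v).1) p * dY (fun v => (cQ q' v).1) p +
      dX (fun v => (cQ q v).2) p * dX (fun v => (cQ q' v).2) p +
      dY (fun v => (cQ q v).2) p * dY (fun v => (cQ q' v).2) p = 0 := by
  rw [dX1_zero q' p h, dY1_zero q' p h, dX2_zero q' p h, dY2_zero q' p h]; ring

def block9 (i j : ℤ) : Finset (ℤ × ℤ) :=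
  {(i - 1, j - 1), (i - 1, j), (i - 1, j + 1), (i, j - 1), (i, j), (i, j + 1),
    (i + 1, j - 1), (i + 1, j), (i + 1, j + 1)}

lemma sum_block9 (i j : ℤ) (f : ℤ × ℤ → ℝ) :
    ∑ p ∈ block9 i j, f p =
      f (i - 1, j - 1) + f (i - 1, j) + f (i - 1, j + 1) + f (i, j - 1) + f (i, j) +
        f (i, j + 1) + f (i + 1, j - 1) + f (i + 1, j) + f (i + 1, j + 1) := by
  unfold block9
  rw [Finset.sum_insert
      (by simp only [Finset.mem_insert, Finset.mem_singleton, Prod.ext_iff]; omega),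
    Finset.sum_insert
      (by simp only [Finset.mem_insert, Finset.mem_singleton, Prod.ext_iff]; omega),
    Finset.sum_insert
      (by simp only [Finset.mem_insert, Finset.mem_singleton, Prod.ext_iff]; omega),
    Finset.sum_insert
      (by simp only [Finset.mem_insert, Finset.mem_singleton, Prod.ext_iff]; omega),
    Finset.sum_insert
      (by simp only [Finset.mem_insert, Finset.mem_singleton, Prod.ext_iff]; omega),
    Finset.sum_insert
      (by simp only [Finset.mem_insert, Finset.mem_singleton, Prod.ext_iff]; omega),
    Finset.sum_insert
      (by simp only [Finset.mem_insert, Finset.mem_singleton, Prod.ext_iff]; omega),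
    Finset.sum_insert
      (by simp only [Finset.mem_singleton, Prod.ext_iff]; omega),
    Finset.sum_singleton]
  ring

/-- The value of the summand of `innerH` at the square with offsets `(a,b)` from the red
square and `(a',b')` from the black square. -/
noncomputable def TT (a b a' b' : ℤ) : ℝ :=
  ((Pv (a + 1) b).1 + (Pv (a + 1) (b + 1)).1 - (Pv a b).1 - (Pv a (b + 1)).1) *
      ((Pv (a' + 1) b').1 + (Pv (a' + 1) (b' + 1)).1 - (Pv a' b').1 - (Pv a' (b' + 1)).1) +
    ((Pv a (b + 1)).1 + (Pv (a + 1) (b + 1)).1 - (Pv a b).1 - (Pv (a + 1) b).1) *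
      ((Pv a' (b' + 1)).1 + (Pv (a' + 1) (b' + 1)).1 - (Pv a' b').1 - (Pv (a' + 1) b').1) +
    ((Pv (a + 1) b).2 + (Pv (a + 1) (b + 1)).2 - (Pv a b).2 - (Pv a (b + 1)).2) *
      ((Pv (a' + 1) b').2 + (Pv (a' + 1) (b' + 1)).2 - (Pv a' b').2 - (Pv a' (b' + 1)).2) +
    ((Pv a (b + 1)).2 + (Pv (a + 1) (b + 1)).2 - (Pv a b).2 - (Pv (a + 1) b).2) *
      ((Pv a' (b' + 1)).2 + (Pv (a' + 1) (b' + 1)).2 - (Pv a' b').2 - (Pv (a' + 1) b').2)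

lemma term_eval (i j k1 k2 x y : ℤ) :
    dX (fun v => (cQ (i, j) v).1) (x, y) * dX (fun v => (cQ (k1, k2) v).1) (x, y) +
      dY (fun v => (cQ (i, j) v).1) (x, y) * dY (fun v => (cQ (k1, k2) v).1) (x, y) +
      dX (fun v => (cQ (i, j) v).2) (x, y) * dX (fun v => (cQ (k1, k2) v).2) (x, y) +
      dY (fun v => (cQ (i, j) v).2) (x, y) * dY (fun v => (cQ (k1, k2) v).2) (x, y) =
      TT (x - i) (y - j) (x - k1) (y - k2) := by
  simp only [dX1_eval, dY1_eval, dX2_eval, dY2_eval, TT]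

lemma block_sum_eval (i j d1 d2 : ℤ) :
    (∑ p ∈ block9 i j,
      (dX (fun v => (cQ (i, j) v).1) p * dX (fun v => (cQ (i + d1, j + d2) v).1) p +
        dY (fun v => (cQ (i, j) v).1) p * dY (fun v => (cQ (i + d1, j + d2) v).1) p +
        dX (fun v => (cQ (i, j) v).2) p * dX (fun v => (cQ (i + d1, j + d2) v).2) p +
        dY (fun v => (cQ (i, j) v).2) p * dY (fun v => (cQ (i + d1, j + d2) v).2) p)) =
      TT (-1) (-1) (-1 - d1) (-1 - d2) + TT (-1) 0 (-1 - d1) (0 - d2) +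
        TT (-1) 1 (-1 - d1) (1 - d2) + TT 0 (-1) (0 - d1) (-1 - d2) +
        TT 0 0 (0 - d1) (0 - d2) + TT 0 1 (0 - d1) (1 - d2) +
        TT 1 (-1) (1 - d1) (-1 - d2) + TT 1 0 (1 - d1) (0 - d2) +
        TT 1 1 (1 - d1) (1 - d2) := by
  rw [sum_block9]
  simp only [term_eval]
  rw [show i - 1 - i = -1 from by ring, show i + 1 - i = 1 from by ring,
    show j - 1 - j = -1 from by ring, show j + 1 - j = 1 from by ring,
    show i - 1 - (i + d1) = -1 - d1 from by ring, show i + 1 - (i + d1) = 1 - d1 from by ring,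
    show j - 1 - (j + d2) = -1 - d2 from by ring, show j + 1 - (j + d2) = 1 - d2 from by ring,
    show i - (i + d1) = 0 - d1 from by ring, show j - (j + d2) = 0 - d2 from by ring,
    show i - i = (0 : ℤ) from by ring, show j - j = (0 : ℤ) from by ring]

set_option maxHeartbeats 1000000 in

/-- Under the standing assumptions, for every interior red square `Q_R` of
`S` and every interior black square `Q_K` of `S`, the broken `H¹` inner product of the
corresponding locally divergence-free elements vanishes: `⟨∇c_{Q_R}, ∇c_{Q_K}⟩ = 0`. -/
theorem innerH_red_black_zero (S : Finset (ℤ × ℤ)) (h : Standing S)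
    (QR QK : ℤ × ℤ) (hQR : QR ∈ S) (hQRint : interiorSquare S QR) (hQRred : isRed QR)
    (hQK : QK ∈ S) (hQKint : interiorSquare S QK) (hQKblack : ¬ isRed QK) :
    innerH S (cQ QR) (cQ QK) = 0 := by
  obtain ⟨i, j⟩ := QR
  obtain ⟨k1, k2⟩ := QK
  obtain ⟨d1, rfl⟩ : ∃ d, k1 = i + d := ⟨k1 - i, by ring⟩
  obtain ⟨d2, rfl⟩ : ∃ d, k2 = j + d := ⟨k2 - j, by ring⟩
  unfold innerH
  by_cases hnear : -2 ≤ d1 ∧ d1 ≤ 2 ∧ -2 ≤ d2 ∧ d2 ≤ 2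
  · -- near case
    have hsub : block9 i j ⊆ S := by
      intro x hx
      have V1 := hQRint.1
      have V2 := hQRint.2.1
      have V3 := hQRint.2.2.1
      have V4 := hQRint.2.2.2
      simp only [block9, Finset.mem_insert, Finset.mem_singleton] at hx
      rcases hx with rfl|rfl|rfl|rfl|rfl|rfl|rfl|rfl|rfl
      · exact V1.1
      · exact V1.2.1
      · exact V3.2.1
      · exact V1.2.2.1
      · exact V1.2.2.2
      · exact V3.2.2.2
      · exact V2.2.2.1
      · exact V2.2.2.2
      · exact V4.2.2.2
    rw [← Finset.sum_subset hsub (by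
      intro x _ hxT
      simp only [block9, Finset.mem_insert, Finset.mem_singleton, Prod.ext_iff, not_or] at hxT
      exact term_zero_left _ _ _ (by omega))]
    rw [block_sum_eval]
    obtain ⟨hb1, hb2, hb3, hb4⟩ := hnear
    have hodd : (d1 + d2) % 2 ≠ 0 := by
      dsimp only [isRed] at hQRred hQKblack; omega
    clear hQR hQK hQRint hQKint hQRred hQKblack h
    interval_cases d1 <;> interval_cases d2 <;>
      first
        | (exfalso; omega)
        | norm_num [TT, Pv]
  · -- far case
    apply Finset.sum_eq_zero
    intro p _
    by_cases hb : i - 1 ≤ p.1 ∧ p.1 ≤ i + 1 ∧ j - 1 ≤ p.2 ∧ p.2 ≤ j + 1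
    · exact term_zero_right _ _ _ (by
        simp only [not_and_or, not_le] at hnear; dsimp only; omega)
    · exact term_zero_left _ _ _ (by dsimp only; omega)
end

section
/- Under the standing assumptions, for all interior squares Q = (i,j) and Q' = (i',j') of S, the broken H¹ inner product of the locally divergence-free elements satisfies: ⟨∇c_Q, ∇c_{Q'}⟩ = 20 if Q' = Q; ⟨∇c_Q, ∇c_{Q'}⟩ = −8 if (i'−i, j'−j) ∈ {(1,1),(1,−1),(−1,1),(−1,−1)}; ⟨∇c_Q, ∇c_{Q'}⟩ = 2 if (i'−i, j'−j) ∈ {(2,0),(−2,0),(0,2),(0,−2)}; ⟨∇c_Q, ∇c_{Q'}⟩ = 1 if (i'−i, j'−j) ∈ {(2,2),(2,−2),(−2,2),(−2,−2)}; and ⟨∇c_Q, ∇c_{Q'}⟩ = 0 in all other cases. -/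
open Finset

noncomputable def gradPair (c c' : ℤ × ℤ → ℝ × ℝ) (q : ℤ × ℤ) : ℝ :=
  dX (fun v => (c v).1) q * dX (fun v => (c' v).1) q +
    dY (fun v => (c v).1) q * dY (fun v => (c' v).1) q +
    dX (fun v => (c v).2) q * dX (fun v => (c' v).2) q +
    dY (fun v => (c v).2) q * dY (fun v => (c' v).2) q

theorem innerH_eq_sum_gradPair (S : Finset (ℤ × ℤ)) (c c' : ℤ × ℤ → ℝ × ℝ) :
    innerH S c c' = ∑ q ∈ S, gradPair c c' q := rfl

theorem Int.Icc_neg_one_one : Icc (-1 : ℤ) 1 = {-1, 0, 1} := by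
  decide

theorem Int.Icc_neg_one_one_prod : Icc (-1 : ℤ × ℤ) 1 =
    {(-1, -1), (-1, 0), (-1, 1), (0, -1), (0, 0), (0, 1), (1, -1), (1, 0), (1, 1)} := by
  decide

theorem dX_comp_add_right (c : ℤ × ℤ → ℝ) (t q : ℤ × ℤ) :
    dX (fun v => c (v + t)) q = dX c (q + t) := by
  obtain ⟨q₁, q₂⟩ := q
  obtain ⟨t₁, t₂⟩ := t
  simp only [dX, Prod.mk_add_mk, add_right_comm]

theorem dY_comp_add_right (c : ℤ × ℤ → ℝ) (t q : ℤ × ℤ) :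
    dY (fun v => c (v + t)) q = dY c (q + t) := by
  obtain ⟨q₁, q₂⟩ := q
  obtain ⟨t₁, t₂⟩ := t
  simp only [dY, Prod.mk_add_mk, add_right_comm]

theorem cQ_add_add (q t v : ℤ × ℤ) : cQ (q + t) (v + t) = cQ q v := by
  obtain ⟨q₁, q₂⟩ := q
  obtain ⟨t₁, t₂⟩ := t
  obtain ⟨v₁, v₂⟩ := v
  simp only [cQ, Prod.mk_add_mk, Prod.mk.injEq]
  split_ifs <;> first | rfl | omega

theorem cQ_eq_cQ_zero_comp (q : ℤ × ℤ) : cQ q = fun v => cQ 0 (v + -q) := by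
  funext v
  rw [← cQ_add_add 0 q, zero_add, neg_add_cancel_right]

theorem dX_eq_zero {c : ℤ × ℤ → ℝ} {q : ℤ × ℤ} (h : ∀ v ∈ cornersF q, c v = 0) :
    dX c q = 0 := by
  simp only [cornersF, mem_insert, mem_singleton, forall_eq_or_imp, forall_eq] at h
  simp only [dX, h.1, h.2.1, h.2.2.1, h.2.2.2, sub_zero, add_zero]

theorem dY_eq_zero {c : ℤ × ℤ → ℝ} {q : ℤ × ℤ} (h : ∀ v ∈ cornersF q, c v = 0) :
    dY c q = 0 := by
  simp only [cornersF, mem_insert, mem_singleton, forall_eq_or_imp, forall_eq] at h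
  simp only [dY, h.1, h.2.1, h.2.2.1, h.2.2.2, sub_zero, add_zero]

theorem gradPair_eq_zero_of_left {c c' : ℤ × ℤ → ℝ × ℝ} {q : ℤ × ℤ}
    (h : ∀ v ∈ cornersF q, c v = 0) : gradPair c c' q = 0 := by
  have h₁ : ∀ v ∈ cornersF q, (c v).1 = 0 := fun v hv => by rw [h v hv]; rfl
  have h₂ : ∀ v ∈ cornersF q, (c v).2 = 0 := fun v hv => by rw [h v hv]; rfl
  simp only [gradPair, dX_eq_zero h₁, dY_eq_zero h₁, dX_eq_zero h₂, dY_eq_zero h₂, zero_mul,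
    add_zero]

theorem cQ_eq_zero_of_notMem {q v : ℤ × ℤ} (h : v ∉ cornersF q) : cQ q v = 0 := by
  simp only [cornersF, mem_insert, mem_singleton, not_or] at h
  simp only [cQ, if_neg h.1, if_neg h.2.1, if_neg h.2.2.1, if_neg h.2.2.2]
  rfl

theorem sub_mem_Icc_of_mem_cornersF {p q v : ℤ × ℤ} (hp : v ∈ cornersF p)
    (hq : v ∈ cornersF q) : p - q ∈ Icc (-1) 1 := by
  simp only [cornersF, mem_insert, mem_singleton, Prod.ext_iff] at hp hq
  simp only [mem_Icc, Prod.le_def, Prod.fst_sub, Prod.snd_sub, Prod.fst_neg, Prod.snd_neg,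
    Prod.fst_one, Prod.snd_one]
  omega

theorem cQ_eq_zero_of_mem_cornersF {q p : ℤ × ℤ} (h : p - q ∉ Icc (-1) 1) :
    ∀ v ∈ cornersF p, cQ q v = 0 :=
  fun _ hv => cQ_eq_zero_of_notMem fun hq => h (sub_mem_Icc_of_mem_cornersF hv hq)

-- `D = (-1, 0, 1)`, `K = (1, 2, 1)`, `M = (-1/2, 1, -1/2)` on `{-1, 0, 1}`, extended by zero.
noncomputable def diffStencil (a : ℤ) : ℝ := if |a| ≤ 1 then a else 0

noncomputable def sumStencil (a : ℤ) : ℝ := if |a| ≤ 1 then 2 - a ^ 2 else 0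

noncomputable def secondDiffStencil (a : ℤ) : ℝ := if |a| ≤ 1 then 1 - 3 / 2 * a ^ 2 else 0

theorem diffStencil_eq_zero {a : ℤ} (ha : 1 < |a|) : diffStencil a = 0 := if_neg ha.not_ge

theorem sumStencil_eq_zero {a : ℤ} (ha : 1 < |a|) : sumStencil a = 0 := if_neg ha.not_ge

theorem secondDiffStencil_eq_zero {a : ℤ} (ha : 1 < |a|) : secondDiffStencil a = 0 :=
  if_neg ha.not_ge

theorem grad_cQ_zero_eq_stencil (p : ℤ × ℤ) :
    dX (fun v => (cQ 0 v).1) p = -(diffStencil p.1 * diffStencil p.2) / 2 ∧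
      dY (fun v => (cQ 0 v).1) p = sumStencil p.1 * secondDiffStencil p.2 ∧
      dX (fun v => (cQ 0 v).2) p = -(secondDiffStencil p.1 * sumStencil p.2) ∧
      dY (fun v => (cQ 0 v).2) p = diffStencil p.1 * diffStencil p.2 / 2 := by
  by_cases hp : p ∈ Icc (-1) 1
  · rw [Int.Icc_neg_one_one_prod] at hp
    simp only [mem_insert, mem_singleton] at hp
    rcases hp with rfl | rfl | rfl | rfl | rfl | rfl | rfl | rfl | rfl <;>
      norm_num [dX, dY, cQ, diffStencil, sumStencil, secondDiffStencil]
  · have h₀ := cQ_eq_zero_of_mem_cornersF (q := 0) (by rwa [sub_zero])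
    have h₁ : ∀ v ∈ cornersF p, (cQ 0 v).1 = 0 := fun v hv => by rw [h₀ v hv]; rfl
    have h₂ : ∀ v ∈ cornersF p, (cQ 0 v).2 = 0 := fun v hv => by rw [h₀ v hv]; rfl
    have hp' : 1 < |p.1| ∨ 1 < |p.2| := by
      simp only [mem_Icc, Prod.le_def, Prod.fst_neg, Prod.snd_neg, Prod.fst_one,
        Prod.snd_one, lt_abs] at hp ⊢
      omega
    rw [dX_eq_zero h₁, dY_eq_zero h₁, dX_eq_zero h₂, dY_eq_zero h₂]
    rcases hp' with hp' | hp' <;>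
      simp [diffStencil_eq_zero hp', sumStencil_eq_zero hp', secondDiffStencil_eq_zero hp']

theorem gradPair_cQ (q q' p : ℤ × ℤ) :
    gradPair (cQ q) (cQ q') p =
      diffStencil (p - q).1 * diffStencil (p - q').1 *
          (diffStencil (p - q).2 * diffStencil (p - q').2) / 2 +
        sumStencil (p - q).1 * sumStencil (p - q').1 *
          (secondDiffStencil (p - q).2 * secondDiffStencil (p - q').2) +
        secondDiffStencil (p - q).1 * secondDiffStencil (p - q').1 *
          (sumStencil (p - q).2 * sumStencil (p - q').2) := by
  obtain ⟨hX₁, hY₁, hX₂, hY₂⟩ := grad_cQ_zero_eq_stencil (p + -q)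
  obtain ⟨hX₁', hY₁', hX₂', hY₂'⟩ := grad_cQ_zero_eq_stencil (p + -q')
  rw [cQ_eq_cQ_zero_comp q, cQ_eq_cQ_zero_comp q', gradPair]
  simp only [dX_comp_add_right (fun v => (cQ 0 v).1), dY_comp_add_right (fun v => (cQ 0 v).1),
    dX_comp_add_right (fun v => (cQ 0 v).2), dY_comp_add_right (fun v => (cQ 0 v).2)]
  rw [hX₁, hY₁, hX₂, hY₂, hX₁', hY₁', hX₂', hY₂', ← sub_eq_add_neg, ← sub_eq_add_neg]
  ring

theorem map_Icc_subset_of_interiorSquare {S : Finset (ℤ × ℤ)} {Q : ℤ × ℤ}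
    (hQ : interiorSquare S Q) : (Icc (-1) 1).map (addRightEmbedding Q) ⊆ S := by
  obtain ⟨i, j⟩ := Q
  simp only [interiorSquare, interiorVertex, add_sub_cancel_right] at hQ
  obtain ⟨⟨h₁, h₂, h₄, h₅⟩, ⟨-, -, h₇, h₈⟩, ⟨-, h₃, -, h₆⟩, -, -, -, h₉⟩ := hQ
  intro p hp
  rw [Int.Icc_neg_one_one_prod] at hp
  simp only [map_insert, map_singleton, addRightEmbedding_apply, Prod.mk_add_mk, mem_insert,
    mem_singleton] at hp
  rcases hp with rfl | rfl | rfl | rfl | rfl | rfl | rfl | rfl | rfl <;>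
    simp only [neg_add_eq_sub, zero_add, add_comm (1 : ℤ)] <;> assumption

theorem innerH_cQ_eq_sum_Icc {S : Finset (ℤ × ℤ)} {Q : ℤ × ℤ} (hQ : interiorSquare S Q)
    (Q' : ℤ × ℤ) :
    innerH S (cQ Q) (cQ Q') = ∑ r ∈ Icc (-1) 1, gradPair (cQ Q) (cQ Q') (r + Q) := by
  rw [innerH_eq_sum_gradPair, ← sum_subset (map_Icc_subset_of_interiorSquare hQ), sum_map]
  · rfl
  · intro p _ hp
    refine gradPair_eq_zero_of_left (cQ_eq_zero_of_mem_cornersF fun h => hp ?_)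
    exact mem_map.2 ⟨p - Q, h, sub_add_cancel p Q⟩

/-- Summing over `{-1, 0, 1}` only, this is the autocorrelation of `f` when `f` is supported
there. -/
noncomputable def autocorr (f : ℤ → ℝ) (t : ℤ) : ℝ := ∑ a ∈ Icc (-1) 1, f a * f (a - t)

theorem innerH_cQ_eq_autocorr {S : Finset (ℤ × ℤ)} {Q : ℤ × ℤ} (hQ : interiorSquare S Q)
    (Q' : ℤ × ℤ) :
    innerH S (cQ Q) (cQ Q') =
      autocorr diffStencil (Q' - Q).1 * autocorr diffStencil (Q' - Q).2 / 2 +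
        autocorr sumStencil (Q' - Q).1 * autocorr secondDiffStencil (Q' - Q).2 +
        autocorr secondDiffStencil (Q' - Q).1 * autocorr sumStencil (Q' - Q).2 := by
  simp only [innerH_cQ_eq_sum_Icc hQ, gradPair_cQ, add_sub_cancel_right, ← sub_sub_eq_add_sub,
    sum_add_distrib, ← sum_div, Icc_prod_def, sum_product, ← sum_mul_sum, autocorr,
    Prod.fst_sub, Prod.snd_sub, Prod.fst_neg, Prod.snd_neg, Prod.fst_one, Prod.snd_one]

theorem autocorr_eq_zero {f : ℤ → ℝ} (hf : ∀ a, 1 < |a| → f a = 0) {t : ℤ} (ht : 2 < |t|) :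
    autocorr f t = 0 :=
  sum_eq_zero fun a ha => by
    rw [hf (a - t) (by rw [mem_Icc] at ha; rw [lt_abs] at ht ⊢; omega), mul_zero]

theorem autocorr_eq {f : ℤ → ℝ} (hf : ∀ a, 1 < |a| → f a = 0) (t : ℤ) :
    autocorr f t =
      if t = 0 then f (-1) ^ 2 + f 0 ^ 2 + f 1 ^ 2
      else if |t| = 1 then f (-1) * f 0 + f 0 * f 1
      else if |t| = 2 then f (-1) * f 1
      else 0 := by
  rcases lt_or_ge 2 |t| with ht | ht
  · rw [autocorr_eq_zero hf ht]
    split_ifs with h₀ <;> first | rfl | omega | simp [h₀] at ht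
  · obtain ⟨ht₁, ht₂⟩ := abs_le.1 ht
    have h₂ := hf 2 (by norm_num)
    have h₃ := hf 3 (by norm_num)
    have h₂' := hf (-2) (by norm_num)
    have h₃' := hf (-3) (by norm_num)
    simp only [autocorr, Int.Icc_neg_one_one]
    interval_cases t <;> norm_num [h₂, h₃, h₂', h₃'] <;> ring

theorem autocorr_stencil_combination_eq (d : ℤ × ℤ) :
    autocorr diffStencil d.1 * autocorr diffStencil d.2 / 2 +
        autocorr sumStencil d.1 * autocorr secondDiffStencil d.2 +
        autocorr secondDiffStencil d.1 * autocorr sumStencil d.2 =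
      if d = 0 then 20
      else if d ∈ ({(1, 1), (1, -1), (-1, 1), (-1, -1)} : Finset (ℤ × ℤ)) then -8
      else if d ∈ ({(2, 0), (-2, 0), (0, 2), (0, -2)} : Finset (ℤ × ℤ)) then 2
      else if d ∈ ({(2, 2), (2, -2), (-2, 2), (-2, -2)} : Finset (ℤ × ℤ)) then 1
      else 0 := by
  obtain ⟨d₁, d₂⟩ := d
  by_cases h : |d₁| ≤ 2 ∧ |d₂| ≤ 2
  · obtain ⟨⟨h₁, h₁'⟩, ⟨h₂, h₂'⟩⟩ := And.imp abs_le.1 abs_le.1 h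
    simp only [autocorr_eq fun _ => diffStencil_eq_zero, autocorr_eq fun _ => sumStencil_eq_zero,
      autocorr_eq fun _ => secondDiffStencil_eq_zero]
    norm_num [diffStencil, sumStencil, secondDiffStencil]
    interval_cases d₁ <;> interval_cases d₂ <;> norm_num
  · rw [not_and_or, not_le, not_le] at h
    have hfar := h.imp lt_abs.1 lt_abs.1
    rcases h with h | h <;>
      simp only [autocorr_eq_zero (fun _ => diffStencil_eq_zero) h,
        autocorr_eq_zero (fun _ => sumStencil_eq_zero) h,
        autocorr_eq_zero (fun _ => secondDiffStencil_eq_zero) h,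
        zero_mul, mul_zero, zero_div, add_zero] <;>
      split_ifs <;> simp_all [Prod.ext_iff] <;> omega

theorem innerH_cQ_values_general (S : Finset (ℤ × ℤ))
    (Q Q' : ℤ × ℤ) (hQint : interiorSquare S Q) :
    innerH S (cQ Q) (cQ Q') =
      if Q' = Q then 20
      else if (Q'.1 - Q.1, Q'.2 - Q.2) ∈
          ({(1, 1), (1, -1), (-1, 1), (-1, -1)} : Finset (ℤ × ℤ)) then -8
      else if (Q'.1 - Q.1, Q'.2 - Q.2) ∈
          ({(2, 0), (-2, 0), (0, 2), (0, -2)} : Finset (ℤ × ℤ)) then 2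
      else if (Q'.1 - Q.1, Q'.2 - Q.2) ∈
          ({(2, 2), (2, -2), (-2, 2), (-2, -2)} : Finset (ℤ × ℤ)) then 1
      else 0 := by
  rw [innerH_cQ_eq_autocorr hQint, autocorr_stencil_combination_eq]
  simp only [sub_eq_zero]
  rfl

/-- Under the standing assumptions, for all interior squares `Q = (i,j)` and
`Q' = (i',j')` of `S`, the broken `H¹` inner product of the locally divergence-free elements
satisfies: `⟨∇c_Q, ∇c_{Q'}⟩ = 20` if `Q' = Q`; `= −8` if `(i'−i, j'−j) ∈ {(±1,±1)}`;
`= 2` if `(i'−i, j'−j) ∈ {(±2,0),(0,±2)}`; `= 1` if `(i'−i, j'−j) ∈ {(±2,±2)}`; and `= 0` in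
all other cases. -/
theorem innerH_cQ_values (S : Finset (ℤ × ℤ)) (h : Standing S)
    (Q Q' : ℤ × ℤ) (hQ : Q ∈ S) (hQint : interiorSquare S Q)
    (hQ' : Q' ∈ S) (hQ'int : interiorSquare S Q') :
    innerH S (cQ Q) (cQ Q') =
      if Q' = Q then 20
      else if (Q'.1 - Q.1, Q'.2 - Q.2) ∈
          ({(1, 1), (1, -1), (-1, 1), (-1, -1)} : Finset (ℤ × ℤ)) then -8
      else if (Q'.1 - Q.1, Q'.2 - Q.2) ∈
          ({(2, 0), (-2, 0), (0, 2), (0, -2)} : Finset (ℤ × ℤ)) then 2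
      else if (Q'.1 - Q.1, Q'.2 - Q.2) ∈
          ({(2, 2), (2, -2), (-2, 2), (-2, -2)} : Finset (ℤ × ℤ)) then 1
      else 0 :=
  innerH_cQ_values_general S Q Q' hQint
end

section
/- Assume Ω is connected and simply connected. For all c, c' : ℤ×ℤ → ℝ×ℝ supported on the interior vertices such that (Dc)(Q) = 0 and (Dc')(Q) = 0 for every square Q of S, the broken H¹ inner product equals the inner product of the discrete curls: ⟨∇c, ∇c'⟩ = Σ_{Q∈S} (Cc)(Q)·(Cc')(Q). -/
section AuxJacobi

open Finset

/-- Shift-invariance of a finitely supported sum. -/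
lemma sum_shift_aux (T : Finset (ℤ × ℤ)) (Φ : ℤ × ℤ → ℝ) (s : ℤ × ℤ)
    (h1 : ∀ q ∉ T, Φ q = 0) (h2 : ∀ q ∉ T, Φ (q.1 + s.1, q.2 + s.2) = 0) :
    ∑ q ∈ T, Φ (q.1 + s.1, q.2 + s.2) = ∑ q ∈ T, Φ q := by
  classical
  have hinj : ∀ a ∈ T, ∀ b ∈ T,
      (fun q : ℤ × ℤ => (q.1 + s.1, q.2 + s.2)) a =
        (fun q : ℤ × ℤ => (q.1 + s.1, q.2 + s.2)) b → a = b := by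
    intro a _ b _ h
    simp only [Prod.mk.injEq] at h
    exact Prod.ext (by omega) (by omega)
  have himg : ∑ q ∈ T.image (fun q : ℤ × ℤ => (q.1 + s.1, q.2 + s.2)), Φ q
      = ∑ q ∈ T, Φ (q.1 + s.1, q.2 + s.2) := Finset.sum_image hinj
  set Tm := T.image (fun q : ℤ × ℤ => (q.1 + s.1, q.2 + s.2)) with hTm
  have hleft : ∑ q ∈ Tm, Φ q = ∑ q ∈ T ∩ Tm, Φ q := by
    refine (Finset.sum_subset Finset.inter_subset_right ?_).symm
    intro q hq hq'
    exact h1 q (fun hT => hq' (Finset.mem_inter.mpr ⟨hT, hq⟩))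
  have hright : ∑ q ∈ T, Φ q = ∑ q ∈ T ∩ Tm, Φ q := by
    refine (Finset.sum_subset Finset.inter_subset_left ?_).symm
    intro q hq hq'
    have hqm : q ∉ Tm := fun hm => hq' (Finset.mem_inter.mpr ⟨hq, hm⟩)
    obtain ⟨a, b⟩ := q
    have hq2 : (a - s.1, b - s.2) ∉ T := by
      intro hT
      exact hqm (Finset.mem_image.mpr ⟨(a - s.1, b - s.2), hT, by
        simp only [Prod.mk.injEq]; constructor <;> ring⟩)
    have := h2 _ hq2
    simpa using this
  rw [← himg, hleft, hright]

/-- If a square is not in `S`, none of its corners is an interior vertex. -/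
lemma corners_not_interior (S : Finset (ℤ × ℤ)) (q : ℤ × ℤ) (hq : q ∉ S) :
    ¬ interiorVertex S q ∧ ¬ interiorVertex S (q.1 + 1, q.2) ∧
      ¬ interiorVertex S (q.1, q.2 + 1) ∧ ¬ interiorVertex S (q.1 + 1, q.2 + 1) := by
  refine ⟨fun h => hq h.2.2.2, fun h => hq ?_, fun h => hq ?_, fun h => hq ?_⟩
  · have := h.2.1; simpa using this
  · have := h.2.2.1; simpa using this
  · have := h.1; simpa using this

/-- The discrete Jacobian of two scalar fields supported on interior vertices sums to zero. -/
lemma jacobi_sum_zero (S : Finset (ℤ × ℤ)) (f g : ℤ × ℤ → ℝ)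
    (hf : ∀ v, ¬ interiorVertex S v → f v = 0)
    (hg : ∀ v, ¬ interiorVertex S v → g v = 0) :
    ∑ q ∈ S, (dX f q * dY g q - dY f q * dX g q) = 0 := by
  classical
  set H : ℤ × ℤ → ℝ := fun q => f q * g (q.1 + 1, q.2) - f (q.1 + 1, q.2) * g q with hHdef
  set V : ℤ × ℤ → ℝ := fun q => f q * g (q.1, q.2 + 1) - f (q.1, q.2 + 1) * g q with hVdef
  have hHzero : ∀ q : ℤ × ℤ, q ∉ S → H q = 0 := by
    intro q hq
    have hni : ¬ interiorVertex S q := fun h => hq h.2.2.2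
    simp [hHdef, hf q hni, hg q hni]
  have hVzero : ∀ q : ℤ × ℤ, q ∉ S → V q = 0 := by
    intro q hq
    have hni : ¬ interiorVertex S q := fun h => hq h.2.2.2
    simp [hVdef, hf q hni, hg q hni]
  set T : Finset (ℤ × ℤ) :=
    (S ∪ S.image (fun p => (p.1, p.2 - 1))) ∪ S.image (fun p => (p.1 - 1, p.2)) with hTdef
  have hST : S ⊆ T := fun q hq =>
    Finset.mem_union.mpr (Or.inl (Finset.mem_union.mpr (Or.inl hq)))
  -- extend the sum from S to T
  have hext : ∑ q ∈ S, (dX f q * dY g q - dY f q * dX g q)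
      = ∑ q ∈ T, (dX f q * dY g q - dY f q * dX g q) := by
    refine Finset.sum_subset hST ?_
    intro q _ hq
    obtain ⟨h0, h1, h2, h3⟩ := corners_not_interior S q hq
    have e0 : f (q.1, q.2) = 0 := by simpa using hf (q.1, q.2) (by simpa using h0)
    have e1 : f (q.1 + 1, q.2) = 0 := hf _ h1
    have e2 : f (q.1, q.2 + 1) = 0 := hf _ h2
    have e3 : f (q.1 + 1, q.2 + 1) = 0 := hf _ h3
    simp [dX, dY, e0, e1, e2, e3]
  rw [hext]
  -- rewrite each summand as a telescoping combination of edge terms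
  have hloc : ∀ q : ℤ × ℤ, dX f q * dY g q - dY f q * dX g q
      = 2 * H q + 2 * V (q.1 + 1, q.2) - 2 * H (q.1, q.2 + 1) - 2 * V q := by
    intro q
    simp only [hHdef, hVdef, dX, dY]
    ring
  rw [Finset.sum_congr rfl (fun q _ => hloc q)]
  have hsplit : ∑ q ∈ T, (2 * H q + 2 * V (q.1 + 1, q.2) - 2 * H (q.1, q.2 + 1) - 2 * V q)
      = 2 * (∑ q ∈ T, H q) + 2 * (∑ q ∈ T, V (q.1 + 1, q.2))
        - 2 * (∑ q ∈ T, H (q.1, q.2 + 1)) - 2 * (∑ q ∈ T, V q) := by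
    rw [Finset.sum_sub_distrib, Finset.sum_sub_distrib, Finset.sum_add_distrib,
      ← Finset.mul_sum, ← Finset.mul_sum, ← Finset.mul_sum, ← Finset.mul_sum]
  rw [hsplit]
  have hHs : ∑ q ∈ T, H (q.1, q.2 + 1) = ∑ q ∈ T, H q := by
    have := sum_shift_aux T H (0, 1) (fun q hq => hHzero q (fun h => hq (hST h))) ?_
    · simpa using this
    · intro q hq
      obtain ⟨a, b⟩ := q
      apply hHzero
      intro hmem
      apply hq
      refine Finset.mem_union.mpr (Or.inl (Finset.mem_union.mpr (Or.inr ?_)))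
      exact Finset.mem_image.mpr ⟨(a + 0, b + 1), hmem, by
        simp only [Prod.mk.injEq]; constructor <;> ring⟩
  have hVs : ∑ q ∈ T, V (q.1 + 1, q.2) = ∑ q ∈ T, V q := by
    have := sum_shift_aux T V (1, 0) (fun q hq => hVzero q (fun h => hq (hST h))) ?_
    · simpa using this
    · intro q hq
      obtain ⟨a, b⟩ := q
      apply hVzero
      intro hmem
      apply hq
      refine Finset.mem_union.mpr (Or.inr ?_)
      exact Finset.mem_image.mpr ⟨(a + 1, b + 0), hmem, by
        simp only [Prod.mk.injEq]; constructor <;> ring⟩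
  rw [hHs, hVs]
  ring

end AuxJacobi

/-- Assume `Ω` is connected and simply connected.  For all
`c, c' : ℤ × ℤ → ℝ × ℝ` supported on the interior vertices whose discrete divergences vanish
on every square of `S`, the broken `H¹` inner product equals the inner product of the discrete
curls: `⟨∇c, ∇c'⟩ = Σ_{Q∈S} (Cc)(Q)·(Cc')(Q)`. -/
theorem innerH_eq_curl_inner (S : Finset (ℤ × ℤ)) (hS : S.Nonempty)
    (hconn : IsConnected (interior (meshRegion S)))
    (hsc : SimplyConnectedSpace ↥(interior (meshRegion S)))
    (c c' : ℤ × ℤ → ℝ × ℝ)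
    (hc : ∀ v : ℤ × ℤ, ¬ interiorVertex S v → c v = 0)
    (hc' : ∀ v : ℤ × ℤ, ¬ interiorVertex S v → c' v = 0)
    (hdc : ∀ q ∈ S, Ddiv c q = 0) (hdc' : ∀ q ∈ S, Ddiv c' q = 0) :
    innerH S c c' = ∑ q ∈ S, Ccurl c q * Ccurl c' q := by
  classical
  have hc1 : ∀ v, ¬ interiorVertex S v → (c v).1 = 0 := fun v hv => by rw [hc v hv]; rfl
  have hc2 : ∀ v, ¬ interiorVertex S v → (c v).2 = 0 := fun v hv => by rw [hc v hv]; rfl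
  have hc'1 : ∀ v, ¬ interiorVertex S v → (c' v).1 = 0 := fun v hv => by rw [hc' v hv]; rfl
  have hc'2 : ∀ v, ¬ interiorVertex S v → (c' v).2 = 0 := fun v hv => by rw [hc' v hv]; rfl
  have hJ1 := jacobi_sum_zero S (fun v => (c v).2) (fun v => (c' v).1) hc2 hc'1
  have hJ2 := jacobi_sum_zero S (fun v => (c v).1) (fun v => (c' v).2) hc1 hc'2
  rw [← sub_eq_zero, innerH, ← Finset.sum_sub_distrib]
  have hloc : ∀ q ∈ S,
      (dX (fun v => (c v).1) q * dX (fun v => (c' v).1) q +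
        dY (fun v => (c v).1) q * dY (fun v => (c' v).1) q +
        dX (fun v => (c v).2) q * dX (fun v => (c' v).2) q +
        dY (fun v => (c v).2) q * dY (fun v => (c' v).2) q) - Ccurl c q * Ccurl c' q
      = (dX (fun v => (c v).2) q * dY (fun v => (c' v).1) q
          - dY (fun v => (c v).2) q * dX (fun v => (c' v).1) q)
        - (dX (fun v => (c v).1) q * dY (fun v => (c' v).2) q
          - dY (fun v => (c v).1) q * dX (fun v => (c' v).2) q) := by
    intro q hq
    have h1 := hdc q hq
    have h2 := hdc' q hq
    simp only [Ddiv] at h1 h2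
    simp only [Ccurl]
    linear_combination (dX (fun v => (c' v).1) q + dY (fun v => (c' v).2) q) * h1
  rw [Finset.sum_congr rfl hloc, Finset.sum_sub_distrib, hJ1, hJ2, sub_zero]
end
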